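/- Let ρ_0, ρ_1 be density matrices with a priori probabilities η_0, η_1 > 0 (η_0 + η_1 = 1), and let {E_0, E_1, E_?} be a USD POVM (positive semi-definite, summing to identity, with Tr(E_0 ρ_1) = Tr(E_1 ρ_0) = 0). Then the failure probability Q = η_0 Tr(E_? ρ_0) + η_1 Tr(E_? ρ_1) satisfies Q ≥ 2 √(η_0 η_1) F, where F is the fidelity of ρ_0 and ρ_1. -/

import Mathlib

/-!
Since `Tr(E₀ ρ₁) = Tr(E₁ ρ₀) = 0` with all operators positive, `E₀ √ρ₁ = 0` and `√ρ₀ E₁ = 0`,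
so `E₀ + E₁ + E? = 1` gives `√ρ₀ √ρ₁ = (√ρ₀ √E?) (√E? √ρ₁)`. The fidelity is the trace norm of
`√ρ₀ √ρ₁`; by a polar decomposition and Cauchy–Schwarz for the Hilbert–Schmidt inner product,
the trace norm of a product `B C` is at most `‖B‖₂ ‖C‖₂`, which here gives
`F² ≤ Tr(E? ρ₀) Tr(E? ρ₁)`. AM–GM turns this into the bound on the failure probability.
-/

open Matrix ComplexOrder

/-- The square root of a positive semi-definite matrix, as defined in Mathlib (December 2024). -/
noncomputable def Matrix.PosSemidef.sqrt {n : Type*} {𝕜 : Type*} [Fintype n] [DecidableEq n]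
    [RCLike 𝕜] {A : Matrix n n 𝕜} (hA : A.PosSemidef) : Matrix n n 𝕜 :=
  hA.1.eigenvectorUnitary.1 * diagonal ((↑) ∘ (√·) ∘ hA.1.eigenvalues) *
  (star hA.1.eigenvectorUnitary : Matrix n n 𝕜)

lemma Matrix.PosSemidef.posSemidef_sqrt {n : Type*} {𝕜 : Type*} [Fintype n] [DecidableEq n]
    [RCLike 𝕜] {A : Matrix n n 𝕜} (hA : A.PosSemidef) : PosSemidef hA.sqrt := by
  apply PosSemidef.mul_mul_conjTranspose_same
  refine posSemidef_diagonal_iff.mpr fun i ↦ ?_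
  rw [Function.comp_apply, RCLike.nonneg_iff]
  constructor
  · simp only [RCLike.ofReal_re]; exact Real.sqrt_nonneg _
  · simp only [RCLike.ofReal_im]

/-- The matrix `√ρ₀ ρ₁ √ρ₀` is positive semi-definite. -/
noncomputable def sqrtConjPosSemidef {n : ℕ} {ρ₀ ρ₁ : Matrix (Fin n) (Fin n) ℂ}
    (h₀ : ρ₀.PosSemidef) (h₁ : ρ₁.PosSemidef) :
    (h₀.sqrt * ρ₁ * h₀.sqrt).PosSemidef := by
  have h := h₁.mul_mul_conjTranspose_same h₀.sqrt
  rwa [h₀.posSemidef_sqrt.1] at h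

/-- The fidelity `F(ρ₀, ρ₁) = Tr √(√ρ₀ ρ₁ √ρ₀)` of two positive
semi-definite matrices. -/
noncomputable def fidelity {n : ℕ} {ρ₀ ρ₁ : Matrix (Fin n) (Fin n) ℂ}
    (h₀ : ρ₀.PosSemidef) (h₁ : ρ₁.PosSemidef) : ℝ :=
  ((sqrtConjPosSemidef h₀ h₁).sqrt.trace).re

open scoped MatrixOrder

namespace Matrix

variable {ι 𝕜 : Type*} [Fintype ι] [RCLike 𝕜]

lemma PosSemidef.re_trace_nonneg {A : Matrix ι ι 𝕜} (hA : A.PosSemidef) :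
    0 ≤ RCLike.re A.trace :=
  (RCLike.nonneg_iff.mp hA.trace_nonneg).1

lemma re_trace_mul_sq_le (P C : Matrix ι ι 𝕜) :
    RCLike.re (P * C).trace ^ 2 ≤ RCLike.re (P * Pᴴ).trace * RCLike.re (Cᴴ * C).trace := by
  have hquad (x : ℝ) : 0 ≤ RCLike.re (P * Pᴴ).trace * (x * x) +
      2 * RCLike.re (P * C).trace * x + RCLike.re (Cᴴ * C).trace := by
    have h := (posSemidef_conjTranspose_mul_self (x • Pᴴ + C)).re_trace_nonneg
    have hsymm : RCLike.re (Cᴴ * Pᴴ).trace = RCLike.re (P * C).trace := by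
      rw [← conjTranspose_mul, trace_conjTranspose, RCLike.star_def, RCLike.conj_re]
    simp only [conjTranspose_add, conjTranspose_smul, star_trivial, conjTranspose_conjTranspose,
      add_mul, mul_add, smul_mul_assoc, mul_smul_comm, trace_add, trace_smul, map_add,
      RCLike.smul_re, hsymm] at h
    linarith
  have := discrim_le_zero hquad
  rw [discrim] at this
  nlinarith

variable [DecidableEq ι]

lemma PosSemidef.sqrt_eq_cfc {A : Matrix ι ι 𝕜} (hA : A.PosSemidef) :
    hA.sqrt = cfc Real.sqrt A := by
  rw [hA.1.cfc_eq]
  rfl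

lemma PosSemidef.sqrt_mul_self {A : Matrix ι ι 𝕜} (hA : A.PosSemidef) :
    hA.sqrt * hA.sqrt = A := by
  have hspec (x : ℝ) (hx : x ∈ spectrum ℝ A) : 0 ≤ x :=
    spectrum_nonneg_of_nonneg (nonneg_iff_posSemidef.mpr hA) hx
  rw [hA.sqrt_eq_cfc, ← cfc_mul _ _ A (A.finite_real_spectrum.continuousOn _)
    (A.finite_real_spectrum.continuousOn _)]
  conv_rhs => rw [← cfc_id' ℝ A]
  exact cfc_congr fun x hx => Real.mul_self_sqrt (hspec x hx)

lemma PosSemidef.trace_sqrt_mul_mul_sqrt {A : Matrix ι ι 𝕜} (hA : A.PosSemidef)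
    (M : Matrix ι ι 𝕜) : (hA.sqrt * M * hA.sqrt).trace = (M * A).trace := by
  rw [trace_mul_cycle, hA.sqrt_mul_self, trace_mul_comm]

lemma PosSemidef.re_trace_mul_nonneg {A B : Matrix ι ι 𝕜} (hA : A.PosSemidef)
    (hB : B.PosSemidef) : 0 ≤ RCLike.re (A * B).trace := by
  rw [← hB.trace_sqrt_mul_mul_sqrt]
  have h := hA.mul_mul_conjTranspose_same hB.sqrt
  rw [hB.posSemidef_sqrt.1] at h
  exact h.re_trace_nonneg

lemma PosSemidef.mul_sqrt_eq_zero_of_trace_mul_eq_zero {E A : Matrix ι ι 𝕜} (hE : E.PosSemidef)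
    (hA : A.PosSemidef) (h : (E * A).trace = 0) : E * hA.sqrt = 0 := by
  have hsymm : hA.sqrtᴴ = hA.sqrt := hA.posSemidef_sqrt.1
  have hconj : hA.sqrt * E * hA.sqrt = 0 := by
    have hpsd := hE.mul_mul_conjTranspose_same hA.sqrt
    rw [hsymm] at hpsd
    exact hpsd.trace_eq_zero_iff.mp (by rw [hA.trace_sqrt_mul_mul_sqrt, h])
  have hroot : hE.sqrt * hA.sqrt = 0 := by
    refine conjTranspose_mul_self_eq_zero.mp ?_
    rw [conjTranspose_mul, hE.posSemidef_sqrt.1, hsymm, ← hconj, Matrix.mul_assoc,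
      ← Matrix.mul_assoc hE.sqrt, hE.sqrt_mul_self, ← Matrix.mul_assoc]
  rw [← hE.sqrt_mul_self, Matrix.mul_assoc, hroot, Matrix.mul_zero]

lemma exists_mul_eq_cfc_sqrt_mul_conjTranspose (X : Matrix ι ι 𝕜) :
    ∃ W : Matrix ι ι 𝕜, X * W = cfc Real.sqrt (X * Xᴴ) ∧ (1 - Wᴴ * W).PosSemidef := by
  set A := X * Xᴴ with hAX
  have hA : IsSelfAdjoint A := (posSemidef_self_mul_conjTranspose X).1
  have hspec (x : ℝ) (hx : x ∈ spectrum ℝ A) : 0 ≤ x :=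
    spectrum_nonneg_of_nonneg (nonneg_iff_posSemidef.mpr (posSemidef_self_mul_conjTranspose X)) hx
  have hcont (f : ℝ → ℝ) : ContinuousOn f (spectrum ℝ A) := A.finite_real_spectrum.continuousOn f
  -- `W = Xᴴ (X Xᴴ)^(-1/2)`; since `(√0)⁻¹ = 0`, `Wᴴ W` is the projection onto the range of `X Xᴴ`.
  set G := cfc (fun x : ℝ => (√x)⁻¹) A
  have hG : Gᴴ = G := cfc_predicate (fun x : ℝ => (√x)⁻¹) A
  refine ⟨Xᴴ * G, ?_, ?_⟩
  · calc X * (Xᴴ * G) = cfc (fun x : ℝ => x) A * G := by rw [cfc_id' ℝ A, Matrix.mul_assoc]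
      _ = cfc Real.sqrt A := by
        rw [← cfc_mul _ _ A (hcont _) (hcont _)]
        exact cfc_congr fun x _ => by simp only [← div_eq_mul_inv, Real.div_sqrt]
  · have hWW : (Xᴴ * G)ᴴ * (Xᴴ * G) = cfc (fun x : ℝ => (√x)⁻¹ * x * (√x)⁻¹) A := by
      rw [cfc_mul _ _ A (hcont _) (hcont _), cfc_mul _ _ A (hcont _) (hcont _), cfc_id' ℝ A,
        conjTranspose_mul, conjTranspose_conjTranspose, hG]
      simp only [hAX, Matrix.mul_assoc]
      rfl
    rw [hWW, ← cfc_one ℝ A, ← cfc_sub _ _ A (hcont _) (hcont _), ← nonneg_iff_posSemidef]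
    refine cfc_nonneg fun x hx => ?_
    rw [sub_nonneg, mul_comm, ← mul_assoc, ← mul_inv, Real.mul_self_sqrt (hspec x hx)]
    exact inv_mul_le_one_of_le₀ le_rfl (hspec x hx)

lemma re_trace_cfc_sqrt_sq_le (B C : Matrix ι ι 𝕜) :
    RCLike.re (cfc Real.sqrt (B * C * (B * C)ᴴ)).trace ^ 2 ≤
      RCLike.re (B * Bᴴ).trace * RCLike.re (Cᴴ * C).trace := by
  obtain ⟨W, hW, hcontr⟩ := exists_mul_eq_cfc_sqrt_mul_conjTranspose (B * C)
  have hWB : RCLike.re (W * B * (W * B)ᴴ).trace ≤ RCLike.re (B * Bᴴ).trace := by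
    have h := hcontr.re_trace_mul_nonneg (posSemidef_self_mul_conjTranspose B)
    rw [sub_mul, one_mul, trace_sub, map_sub, sub_nonneg] at h
    rwa [conjTranspose_mul, ← Matrix.mul_assoc, trace_mul_cycle, ← Matrix.mul_assoc,
      Matrix.mul_assoc (Wᴴ * W)]
  rw [← hW, trace_mul_cycle]
  exact (re_trace_mul_sq_le (W * B) C).trans
    (mul_le_mul_of_nonneg_right hWB (posSemidef_conjTranspose_mul_self C).re_trace_nonneg)

lemma PosSemidef.sqrt_mul_mul_sqrt_eq_of_unambiguous {ρ₀ ρ₁ E₀ E₁ E : Matrix ι ι 𝕜}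
    (h₀ : ρ₀.PosSemidef) (h₁ : ρ₁.PosSemidef) (hE₀ : E₀.PosSemidef) (hE₁ : E₁.PosSemidef)
    (hsum : E₀ + E₁ + E = 1) (hU₀ : (E₀ * ρ₁).trace = 0) (hU₁ : (E₁ * ρ₀).trace = 0) :
    h₀.sqrt * E * h₁.sqrt = h₀.sqrt * h₁.sqrt := by
  have hE₀ρ₁ : E₀ * h₁.sqrt = 0 := hE₀.mul_sqrt_eq_zero_of_trace_mul_eq_zero h₁ hU₀
  have hρ₀E₁ : h₀.sqrt * E₁ = 0 := by
    simpa only [conjTranspose_mul, h₀.posSemidef_sqrt.1.eq, hE₁.1.eq, conjTranspose_zero] using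
      congrArg (fun M => Mᴴ) (hE₁.mul_sqrt_eq_zero_of_trace_mul_eq_zero h₀ hU₁)
  rw [eq_sub_of_add_eq' hsum]
  simp only [mul_sub, sub_mul, mul_add, add_mul, Matrix.mul_one, Matrix.mul_assoc, hE₀ρ₁]
  rw [← Matrix.mul_assoc h₀.sqrt E₁, hρ₀E₁]
  simp

end Matrix

open Matrix

theorem fidelity_sq_le_of_sqrt_mul_mul_sqrt_eq {n : ℕ} {ρ₀ ρ₁ E : Matrix (Fin n) (Fin n) ℂ}
    (h₀ : ρ₀.PosSemidef) (h₁ : ρ₁.PosSemidef) (hE : E.PosSemidef)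
    (h : h₀.sqrt * E * h₁.sqrt = h₀.sqrt * h₁.sqrt) :
    fidelity h₀ h₁ ^ 2 ≤ ((E * ρ₀).trace).re * ((E * ρ₁).trace).re := by
  set B := h₀.sqrt * hE.sqrt
  set C := hE.sqrt * h₁.sqrt
  have hBC : B * C = h₀.sqrt * h₁.sqrt := by
    rw [Matrix.mul_assoc, ← Matrix.mul_assoc hE.sqrt, hE.sqrt_mul_self, ← Matrix.mul_assoc, h]
  have hconj : h₀.sqrt * ρ₁ * h₀.sqrt = B * C * (B * C)ᴴ := by
    rw [hBC, conjTranspose_mul, h₀.posSemidef_sqrt.1, h₁.posSemidef_sqrt.1, Matrix.mul_assoc,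
      Matrix.mul_assoc, ← Matrix.mul_assoc h₁.sqrt, h₁.sqrt_mul_self]
  have hB : (B * Bᴴ).trace = (E * ρ₀).trace := by
    rw [conjTranspose_mul, h₀.posSemidef_sqrt.1, hE.posSemidef_sqrt.1, Matrix.mul_assoc,
      ← Matrix.mul_assoc hE.sqrt, hE.sqrt_mul_self, ← Matrix.mul_assoc, h₀.trace_sqrt_mul_mul_sqrt]
  have hC : (Cᴴ * C).trace = (E * ρ₁).trace := by
    rw [conjTranspose_mul, h₁.posSemidef_sqrt.1, hE.posSemidef_sqrt.1, Matrix.mul_assoc,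
      ← Matrix.mul_assoc hE.sqrt, hE.sqrt_mul_self, ← Matrix.mul_assoc, h₁.trace_sqrt_mul_mul_sqrt]
  rw [fidelity, PosSemidef.sqrt_eq_cfc, hconj, ← hB, ← hC]
  exact re_trace_cfc_sqrt_sq_le B C

theorem failure_prob_ge_two_sqrt_fidelity_general {n : ℕ}
    {ρ₀ ρ₁ E₀ E₁ Eq : Matrix (Fin n) (Fin n) ℂ}
    (h₀ : ρ₀.PosSemidef) (h₁ : ρ₁.PosSemidef)
    (hE₀ : E₀.PosSemidef) (hE₁ : E₁.PosSemidef) (hEq : Eq.PosSemidef)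
    (hsum : E₀ + E₁ + Eq = 1)
    (hU₀ : (E₀ * ρ₁).trace = 0) (hU₁ : (E₁ * ρ₀).trace = 0)
    {η₀ η₁ : ℝ} (hη₀ : 0 < η₀) (hη₁ : 0 < η₁) :
    2 * Real.sqrt (η₀ * η₁) * fidelity h₀ h₁ ≤
      η₀ * ((Eq * ρ₀).trace).re + η₁ * ((Eq * ρ₁).trace).re := by
  set q₀ := ((Eq * ρ₀).trace).re
  set q₁ := ((Eq * ρ₁).trace).re
  have hq₀ : 0 ≤ q₀ := hEq.re_trace_mul_nonneg h₀
  have hq₁ : 0 ≤ q₁ := hEq.re_trace_mul_nonneg h₁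
  have hF : fidelity h₀ h₁ ^ 2 ≤ q₀ * q₁ := fidelity_sq_le_of_sqrt_mul_mul_sqrt_eq h₀ h₁ hEq
    (PosSemidef.sqrt_mul_mul_sqrt_eq_of_unambiguous h₀ h₁ hE₀ hE₁ hsum hU₀ hU₁)
  have hamgm := two_mul_le_add_sq √(η₀ * q₀) √(η₁ * q₁)
  rw [Real.sq_sqrt (by positivity), Real.sq_sqrt (by positivity)] at hamgm
  calc 2 * √(η₀ * η₁) * fidelity h₀ h₁ ≤ 2 * √(η₀ * η₁) * √(q₀ * q₁) := by
        gcongr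
        exact Real.le_sqrt_of_sq_le hF
    _ = 2 * √(η₀ * q₀) * √(η₁ * q₁) := by
        rw [Real.sqrt_mul hη₀.le, Real.sqrt_mul hη₀.le, Real.sqrt_mul hη₁.le, Real.sqrt_mul hq₀]
        ring
    _ ≤ η₀ * q₀ + η₁ * q₁ := hamgm

/-- For a USD POVM with a priori probabilities `η₀, η₁ > 0`, `η₀ + η₁ = 1`,
the failure probability `Q = η₀ Tr(E? ρ₀) + η₁ Tr(E? ρ₁)` satisfies
`Q ≥ 2 √(η₀ η₁) F`. -/
theorem failure_prob_ge_two_sqrt_fidelity {n : ℕ}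
    {ρ₀ ρ₁ E₀ E₁ Eq : Matrix (Fin n) (Fin n) ℂ}
    (h₀ : ρ₀.PosSemidef) (h₁ : ρ₁.PosSemidef)
    (ht₀ : ρ₀.trace = 1) (ht₁ : ρ₁.trace = 1)
    (hE₀ : E₀.PosSemidef) (hE₁ : E₁.PosSemidef) (hEq : Eq.PosSemidef)
    (hsum : E₀ + E₁ + Eq = 1)
    (hU₀ : (E₀ * ρ₁).trace = 0) (hU₁ : (E₁ * ρ₀).trace = 0)
    {η₀ η₁ : ℝ} (hη₀ : 0 < η₀) (hη₁ : 0 < η₁) (hη : η₀ + η₁ = 1) :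
    2 * Real.sqrt (η₀ * η₁) * fidelity h₀ h₁ ≤
      η₀ * ((Eq * ρ₀).trace).re + η₁ * ((Eq * ρ₁).trace).re :=
  failure_prob_ge_two_sqrt_fidelity_general h₀ h₁ hE₀ hE₁ hEq hsum hU₀ hU₁ hη₀ hη₁
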